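/- Let A = E₁ × ⋯ × E_g be a product of g elliptic curves with its natural symmetric principal polarization Θ = ∑ᵢ E₁×⋯×{0ᵢ}×⋯×E_g. For any a ∈ A, the translated divisor t_a*Θ contains at most 2^{2g} − 3^g of the 2^{2g} points of order two of A; in particular there is a point of order two not contained in t_a*Θ. -/

import Mathlib

/-!
A point of order two `x` lies off `t_a*Θ` exactly when `xᵢ ≠ -aᵢ` for every `i`, so the
points of order two off `t_a*Θ` form a product of sets `E_i[2] \ {-aᵢ}`, each with at least
`4 - 1 = 3` elements. Hence at least `3^g` of the `4^g = 2^(2g)` points of order two avoid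
`t_a*Θ`.
-/

open Set

def twoTorsion (G : Type*) [AddGroup G] : Set G := {x | x + x = 0}

/-- `t_a*Θ` for the product theta divisor `Θ = ⋃ᵢ {x | xᵢ = 0}`. -/
def translatedTheta {ι : Type*} {E : ι → Type*} [∀ i, AddGroup (E i)] (a : ∀ i, E i) :
    Set (∀ i, E i) :=
  {x | ∃ i, x i + a i = 0}

section Pi

variable {ι : Type*} {E : ι → Type*}

theorem Set.ncard_univ_pi [Fintype ι] (t : ∀ i, Set (E i)) :
    (univ.pi t).ncard = ∏ i, (t i).ncard := by
  rw [← Nat.card_coe_set_eq, Nat.card_congr (Equiv.Set.univPi t), Nat.card_pi]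
  rfl

variable [∀ i, AddGroup (E i)]

theorem twoTorsion_pi : twoTorsion (∀ i, E i) = univ.pi fun i => twoTorsion (E i) := by
  ext x
  simp [twoTorsion, funext_iff]

theorem twoTorsion_pi_sdiff_translatedTheta (a : ∀ i, E i) :
    twoTorsion (∀ i, E i) \ translatedTheta a = univ.pi fun i => twoTorsion (E i) \ {-a i} := by
  ext x
  simp [twoTorsion, translatedTheta, funext_iff, add_eq_zero_iff_eq_neg, forall_and]

variable [Fintype ι]

theorem ncard_twoTorsion_pi :
    (twoTorsion (∀ i, E i)).ncard = ∏ i, (twoTorsion (E i)).ncard := by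
  rw [twoTorsion_pi, Set.ncard_univ_pi]

theorem prod_pred_ncard_twoTorsion_le_ncard_sdiff_translatedTheta (a : ∀ i, E i) :
    ∏ i, ((twoTorsion (E i)).ncard - 1) ≤ (twoTorsion (∀ i, E i) \ translatedTheta a).ncard := by
  rw [twoTorsion_pi_sdiff_translatedTheta, Set.ncard_univ_pi]
  exact Finset.prod_le_prod' fun i _ => pred_ncard_le_ncard_sdiff_singleton _ _

theorem ncard_twoTorsion_inter_translatedTheta_le
    (hfin : ∀ i, (twoTorsion (E i)).Finite) (a : ∀ i, E i) :
    (twoTorsion (∀ i, E i) ∩ translatedTheta a).ncard ≤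
      ∏ i, (twoTorsion (E i)).ncard - ∏ i, ((twoTorsion (E i)).ncard - 1) := by
  have hsplit := ncard_inter_add_ncard_sdiff_eq_ncard (twoTorsion (∀ i, E i)) (translatedTheta a)
    (by rw [twoTorsion_pi]; exact Finite.pi hfin)
  have hgood := prod_pred_ncard_twoTorsion_le_ncard_sdiff_translatedTheta a
  rw [ncard_twoTorsion_pi] at hsplit
  omega

end Pi

theorem two_torsion_off_translated_theta_general
    {g : ℕ} (E : Fin g → Type*) [∀ i, AddCommGroup (E i)]
    (htors : ∀ i, Nat.card {x : E i // x + x = 0} = 4)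
    (a : ∀ i, E i) :
    Nat.card {x : ∀ i, E i // (x + x = 0) ∧ (∃ i, x i + a i = 0)}
        ≤ 2 ^ (2 * g) - 3 ^ g ∧
      Nat.card {x : ∀ i, E i // x + x = 0} = 2 ^ (2 * g) ∧
      ∃ x : ∀ i, E i, x + x = 0 ∧ ¬ ∃ i, x i + a i = 0 := by
  have h4 : ∀ i, (twoTorsion (E i)).ncard = 4 := htors
  have hfin : ∀ i, (twoTorsion (E i)).Finite := fun i =>
    finite_of_ncard_ne_zero (by rw [h4]; decide)
  have hbad := ncard_twoTorsion_inter_translatedTheta_le hfin a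
  have hgood := prod_pred_ncard_twoTorsion_le_ncard_sdiff_translatedTheta (E := E) a
  simp only [h4, Finset.prod_const, Finset.card_univ, Fintype.card_fin] at hbad hgood
  refine ⟨by rwa [pow_mul], ?_, ?_⟩
  · change (twoTorsion (∀ i, E i)).ncard = _
    simp [ncard_twoTorsion_pi, h4, pow_mul]
  · exact nonempty_of_ncard_ne_zero (hgood.trans_lt' (by positivity)).ne'

/-- Let `A = E₁ × ⋯ × E_g` be a product of `g` elliptic curves
(each modelled as an abelian group whose 2-torsion subgroup has exactly 4
elements), with product theta divisor `Θ = ⋃ᵢ E₁ × ⋯ × {0ᵢ} × ⋯ × E_g`.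
For any `a ∈ A`, the translated divisor `t_a*Θ = {x | x + a ∈ Θ}` contains at
most `2^(2g) − 3^g` of the `2^(2g)` points of order two of `A`; in particular
there exists a point of order two not contained in `t_a*Θ`. -/
theorem two_torsion_off_translated_theta
    {g : ℕ} (hg : 1 ≤ g) (E : Fin g → Type*) [∀ i, AddCommGroup (E i)]
    (htors : ∀ i, Nat.card {x : E i // x + x = 0} = 4)
    (a : ∀ i, E i) :
    Nat.card {x : ∀ i, E i // (x + x = 0) ∧ (∃ i, x i + a i = 0)}
        ≤ 2 ^ (2 * g) - 3 ^ g ∧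
      Nat.card {x : ∀ i, E i // x + x = 0} = 2 ^ (2 * g) ∧
      ∃ x : ∀ i, E i, x + x = 0 ∧ ¬ ∃ i, x i + a i = 0 :=
  two_torsion_off_translated_theta_general E htors a
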